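/- arXiv:2503.10425 — 2 statements merged into one kernel-verified Lean document; each statement's English description precedes it below -/
import Mathlib

section
/- Let G be a finite group, p a prime, x a p-element of G. Then Sub_G(x) is the smallest subgroup R of G such that R contains the centralizer C_G(x), R contains some Sylow p-subgroup of G, and any two G-conjugate elements of R lying in the G-class of x that lie in R are R-conjugate (i.e., whenever xᵍ ∈ R for g ∈ G, x and xᵍ are R-conjugate). -/
variable {G : Type*} [Group G]

/-- `A` is subnormal in `B`: there is a chain `A = s 0 ⊴ s 1 ⊴ ⋯ ⊴ s n = B`. -/
def IsSubnormalIn (A B : Subgroup G) : Prop :=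
  ∃ (n : ℕ) (s : ℕ → Subgroup G), s 0 = A ∧ s n = B ∧
    ∀ i < n, s i ≤ s (i + 1) ∧ ∀ g ∈ s (i + 1), ∀ a ∈ s i, g * a * g⁻¹ ∈ s i

/-- The subnormaliser `Sub_G(x)` of an element `x`. -/
def subnormalizer (x : G) : Subgroup G :=
  Subgroup.closure
    {g : G | IsSubnormalIn (Subgroup.zpowers x) (Subgroup.closure {g, x})}

/-!
Every subgroup of a finite `p`-group is subnormal (normalizer condition), so the normalizer of
any `p`-subgroup `T ∋ x` lies in `Sub_G(x)`: `⟨x⟩ ⊴⊴ T ⊴ N_G(T) ⊇ ⟨u, x⟩`. This covers `C_G(x)`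
(take `T = ⟨x⟩`) and the Sylow subgroups through `x` together with their normalizers.

Fusion holds in the strong form `x^g ∈ S := Sub_G(x) → g ∈ S`: Sylow's theorem in `S` moves
`x^g` into a Sylow subgroup `P ∋ x` by some `s ∈ S`, so `(gs) • P` is again a Sylow subgroup
through `x`; it is `S`-conjugate to `P`, and a Frattini argument with `N_G(P) ≤ S` gives `g ∈ S`.

Minimality: if `C_G(x) ≤ R` and `R` controls the fusion of `x`, then `x^g ∈ R` forces `g ∈ R`.
Along a subnormal chain `⟨x⟩ = s₀ ⊴ ⋯ ⊴ sₙ = ⟨g, x⟩`, each `s_{i+1}` conjugates `x ∈ s_i ≤ R`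
into `s_i`, so `s_{i+1} ≤ R` by induction, and `g ∈ R`.
-/

open Subgroup Pointwise

namespace IsSubnormalIn

variable {A B C : Subgroup G}

theorem refl (A : Subgroup G) : IsSubnormalIn A A :=
  ⟨0, fun _ => A, rfl, rfl, by simp⟩

theorem le (h : IsSubnormalIn A B) : A ≤ B := by
  obtain ⟨n, s, rfl, rfl, hs⟩ := h
  induction n with
  | zero => exact le_rfl
  | succ n ih => exact (ih fun i hi => hs i (by omega)).trans (hs n n.lt_succ_self).1

theorem cons (hAB : A ≤ B) (hBA : B ≤ normalizer (A : Set G)) (hBC : IsSubnormalIn B C) :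
    IsSubnormalIn A C := by
  obtain ⟨n, s, rfl, rfl, hs⟩ := hBC
  refine ⟨n + 1, fun | 0 => A | i + 1 => s i, rfl, rfl, ?_⟩
  rintro (_ | i) hi
  · exact ⟨hAB, fun g hg a ha => (mem_normalizer_iff.mp (hBA hg) a).mp ha⟩
  · exact hs i (by omega)

theorem snoc (hAB : IsSubnormalIn A B) (hBC : B ≤ C) (hCB : C ≤ normalizer (B : Set G)) :
    IsSubnormalIn A C := by
  obtain ⟨n, s, rfl, rfl, hs⟩ := hAB
  refine ⟨n + 1, fun i => if i ≤ n then s i else C, by simp, by simp, fun i hi => ?_⟩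
  rcases Nat.lt_or_ge i n with hin | hin
  · simpa [hin.le, Nat.succ_le_of_lt hin] using hs i hin
  · obtain rfl : i = n := by omega
    simpa using ⟨hBC, fun g hg a ha => (mem_normalizer_iff.mp (hCB hg) a).mp ha⟩

theorem of_le {H : Subgroup G} (hAB : IsSubnormalIn A B) (hAH : A ≤ H) (hHB : H ≤ B) :
    IsSubnormalIn A H := by
  obtain ⟨n, s, rfl, rfl, hs⟩ := hAB
  refine ⟨n, fun i => s i ⊓ H, inf_eq_left.mpr hAH, inf_eq_right.mpr hHB, fun i hi => ?_⟩
  refine ⟨inf_le_inf_right H (hs i hi).1, ?_⟩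
  rintro g ⟨hg, hgH⟩ a ⟨ha, haH⟩
  exact ⟨(hs i hi).2 g hg a ha, H.mul_mem (H.mul_mem hgH haH) (H.inv_mem hgH)⟩

theorem le_of_forall_conj_mem {R : Subgroup G} (hAB : IsSubnormalIn A B) (hAR : A ≤ R)
    (hR : ∀ g, (∀ a ∈ A, g * a * g⁻¹ ∈ R) → g ∈ R) : B ≤ R := by
  obtain ⟨n, s, rfl, rfl, hs⟩ := hAB
  suffices ∀ i ≤ n, s 0 ≤ s i ∧ s i ≤ R from (this n le_rfl).2
  intro i hi
  induction i with
  | zero => exact ⟨le_rfl, hAR⟩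
  | succ i ih =>
    obtain ⟨h0i, hiR⟩ := ih (by omega)
    obtain ⟨hle, hnorm⟩ := hs i (by omega)
    exact ⟨h0i.trans hle, fun g hg => hR g fun a ha => hiR (hnorm g hg a (h0i ha))⟩

end IsSubnormalIn

theorem normalizer_le_subnormalizer {x : G} {T : Subgroup G}
    (hT : IsSubnormalIn (zpowers x) T) : normalizer (T : Set G) ≤ subnormalizer x := by
  have hxT : x ∈ T := hT.le (mem_zpowers x)
  intro u hu
  apply Subgroup.subset_closure
  refine (hT.snoc le_normalizer le_rfl).of_le (zpowers_le.mpr (subset_closure (by simp))) ?_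
  exact closure_le _ |>.mpr (Set.insert_subset hu (Set.singleton_subset_iff.mpr (le_normalizer hxT)))

theorem centralizer_le_subnormalizer (x : G) : centralizer {x} ≤ subnormalizer x := by
  rw [← centralizer_closure, ← zpowers_eq_closure]
  exact (centralizer_le_normalizer _).trans (normalizer_le_subnormalizer (.refl _))

theorem Sylow.mem_smul_iff {p : ℕ} {P : Sylow p G} {g a : G} : a ∈ g • P ↔ g⁻¹ * a * g ∈ P := by
  change a ∈ MulAut.conj g • (P : Subgroup G) ↔ _
  rw [mem_pointwise_smul_iff_inv_smul_mem, ← map_inv, MulAut.smul_def, MulAut.conj_apply, inv_inv]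
  rfl

section PGroup

variable {p : ℕ} [Fact p.Prime] [Finite G]

theorem IsPGroup.exists_lt_le_normalizer {A T : Subgroup G} (hT : IsPGroup p T) (hAT : A < T) :
    ∃ B, A < B ∧ B ≤ T ⊓ normalizer (A : Set G) := by
  have := hT.isNilpotent
  obtain ⟨A, rfl⟩ : ∃ A' : Subgroup T, A'.map T.subtype = A :=
    ⟨A.subgroupOf T, by rw [subgroupOf_map_subtype, inf_eq_left.mpr hAT.le]⟩
  have hA : A < ⊤ := by
    rwa [← map_lt_map_iff_of_injective T.subtype_injective, ← MonoidHom.range_eq_map, range_subtype]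
  refine ⟨(normalizer (A : Set T)).map T.subtype, ?_, ?_⟩
  · exact (map_lt_map_iff_of_injective T.subtype_injective).mpr
      (Group.normalizerCondition_of_isNilpotent _ hA)
  · exact le_inf (map_subtype_le _) (le_normalizer_map _)

theorem IsPGroup.isSubnormalIn {A T : Subgroup G} (hT : IsPGroup p T) (hAT : A ≤ T) :
    IsSubnormalIn A T := by
  induction A using WellFoundedGT.induction with
  | _ A ih =>
    rcases hAT.eq_or_lt with rfl | hlt
    · exact .refl A
    · obtain ⟨B, hAB, hBT⟩ := hT.exists_lt_le_normalizer hlt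
      exact (ih B hAB (hBT.trans inf_le_left)).cons hAB.le (hBT.trans inf_le_right)

theorem normalizer_le_subnormalizer_of_isPGroup {x : G} {T : Subgroup G} (hT : IsPGroup p T)
    (hxT : x ∈ T) : normalizer (T : Set G) ≤ subnormalizer x :=
  normalizer_le_subnormalizer (hT.isSubnormalIn (zpowers_le.mpr hxT))

theorem Sylow.le_subnormalizer {x : G} (P : Sylow p G) (hxP : x ∈ P) :
    (P : Subgroup G) ≤ subnormalizer x :=
  le_normalizer.trans (normalizer_le_subnormalizer_of_isPGroup P.isPGroup' hxP)

theorem Sylow.exists_le_smul_of_le {S H : Subgroup G} (P : Sylow p G) (hPS : (P : Subgroup G) ≤ S)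
    (hH : IsPGroup p H) (hHS : H ≤ S) : ∃ s ∈ S, H ≤ ((s • P : Sylow p G) : Subgroup G) := by
  obtain ⟨Q, hHQ⟩ := hH.comap_subtype (K := S).exists_le_sylow
  obtain ⟨s, rfl⟩ := MulAction.exists_smul_eq S (P.subtype hPS) Q
  refine ⟨s, s.2, fun h hh => ?_⟩
  have := hHQ (show (⟨h, hHS hh⟩ : S) ∈ H.subgroupOf S from hh)
  rwa [Sylow.smul_subtype, Sylow.coe_subtype, mem_subgroupOf] at this

theorem mem_subnormalizer_of_conj_mem {x g : G} (hx : IsPGroup p (zpowers x))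
    (hg : g⁻¹ * x * g ∈ subnormalizer x) : g ∈ subnormalizer x := by
  set S := subnormalizer x
  obtain ⟨P, hxP⟩ := hx.exists_le_sylow
  replace hxP : x ∈ P := hxP (mem_zpowers x)
  have hPS : (P : Subgroup G) ≤ S := P.le_subnormalizer hxP
  have hgP : g⁻¹ * x * g ∈ g⁻¹ • P := Sylow.mem_smul_iff.mpr (by simpa [mul_assoc] using hxP)
  obtain ⟨s, hsS, hgsP⟩ := P.exists_le_smul_of_le hPS ((g⁻¹ • P).isPGroup'.to_le
    (zpowers_le.mpr hgP)) (zpowers_le.mpr hg)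
  -- the Sylow subgroups `(g * s) • P` and `P` of `G` both contain `x`, hence lie in `S`
  have hxQ : x ∈ (g * s) • P := by
    have := Sylow.mem_smul_iff.mp (hgsP (mem_zpowers _))
    exact Sylow.mem_smul_iff.mpr (by simpa [mul_assoc] using this)
  obtain ⟨t, htS, hQt⟩ := P.exists_le_smul_of_le hPS ((g * s) • P).isPGroup'
    (((g * s) • P).le_subnormalizer hxQ)
  have hn : t⁻¹ * (g * s) ∈ normalizer (P : Set G) := by
    rw [← Sylow.smul_eq_iff_mem_normalizer, mul_smul, inv_smul_eq_iff]
    exact Sylow.ext (((g * s) • P).3 (t • P).2 hQt).symm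
  have hgS : t * (t⁻¹ * (g * s)) * s⁻¹ ∈ S :=
    S.mul_mem (S.mul_mem htS (normalizer_le_subnormalizer_of_isPGroup P.isPGroup' hxP hn))
      (S.inv_mem hsS)
  simpa using hgS

end PGroup

theorem subnormalizer_le {x : G} {R : Subgroup G} (hC : centralizer {x} ≤ R)
    (hR : ∀ g : G, g⁻¹ * x * g ∈ R → ∃ r ∈ R, r⁻¹ * x * r = g⁻¹ * x * g) :
    subnormalizer x ≤ R := by
  have hconj : ∀ g, g * x * g⁻¹ ∈ R → g ∈ R := by
    intro g hg
    obtain ⟨r, hr, hrg⟩ := hR g⁻¹ (by simpa using hg)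
    have hrgC : r * g ∈ centralizer {x} := by
      rw [inv_inv] at hrg
      rw [mem_centralizer_singleton_iff]
      calc r * g * x = r * (g * x * g⁻¹) * g := by group
        _ = x * (r * g) := by rw [← hrg]; group
    simpa using R.mul_mem (R.inv_mem hr) (hC hrgC)
  refine closure_le _ |>.mpr fun g hg => ?_
  refine IsSubnormalIn.le_of_forall_conj_mem hg ?_ (fun h hh => hconj h (hh x (mem_zpowers x)))
    (Subgroup.subset_closure (by simp))
  exact zpowers_le.mpr (hC (by simp [mem_centralizer_iff]))

theorem stmt_11 [Fintype G] {p : ℕ} (hp : p.Prime)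
    (x : G) (hx : ∃ k : ℕ, orderOf x = p ^ k) :
    (Subgroup.centralizer {x} ≤ subnormalizer x ∧
      (∃ P : Sylow p G, (P : Subgroup G) ≤ subnormalizer x) ∧
      (∀ g : G, g⁻¹ * x * g ∈ subnormalizer x →
        ∃ r ∈ subnormalizer x, r⁻¹ * x * r = g⁻¹ * x * g)) ∧
    ∀ R : Subgroup G,
      Subgroup.centralizer {x} ≤ R →
      (∃ P : Sylow p G, (P : Subgroup G) ≤ R) →
      (∀ g : G, g⁻¹ * x * g ∈ R → ∃ r ∈ R, r⁻¹ * x * r = g⁻¹ * x * g) →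
      subnormalizer x ≤ R := by
  have := Fact.mk hp
  obtain ⟨k, hk⟩ := hx
  have hxp : IsPGroup p (zpowers x) := IsPGroup.of_card (by rw [Nat.card_zpowers, hk])
  obtain ⟨P, hxP⟩ := hxp.exists_le_sylow
  exact ⟨⟨centralizer_le_subnormalizer x, ⟨P, P.le_subnormalizer (hxP (mem_zpowers x))⟩,
    fun g hg => ⟨g, mem_subnormalizer_of_conj_mem hxp hg, rfl⟩⟩,
    fun R hC _ hR => subnormalizer_le hC hR⟩
end

section
/- Let G = H₁ × ⋯ × H_r be a direct product of finite groups and x = (x₁, …, x_r) ∈ G. Then Sub_G(x) = Sub_{H₁}(x₁) × ⋯ × Sub_{H_r}(x_r). In particular, a p-element x is picky in G if and only if each component x_i is picky in H_i. -/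
variable {G : Type*} [Group G]

/-!
Projecting a subnormal chain to a coordinate gives `Sub_G(x) ≤ ∏ Sub_{H_i}(x_i)`. Conversely, if
`⟨x_i⟩` is subnormal in `⟨h, x_i⟩`, pull the chain back along the `i`-th projection and intersect
it with `C = ⟨mulSingle i h, x⟩`. Every element of `C` lying over `⟨x_i⟩` has all its coordinates
in the `⟨x_j⟩`, hence centralises `x`, so `⟨x⟩` is normal in the bottom term of that chain.

For pickiness: `Q ↦ ∏ Q_i` is a bijection from families of Sylow subgroups onto the Sylow subgroups
of the product, and `x ∈ ∏ Q_i` iff `x_i ∈ Q_i` for every `i`.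
-/

namespace IsSubnormalIn

theorem map {G' : Type*} [Group G'] {A B : Subgroup G} (f : G →* G')
    (h : IsSubnormalIn A B) : IsSubnormalIn (A.map f) (B.map f) := by
  obtain ⟨n, s, rfl, rfl, hs⟩ := h
  refine ⟨n, fun k => (s k).map f, rfl, rfl, fun i hi => ⟨Subgroup.map_mono (hs i hi).1, ?_⟩⟩
  rintro _ ⟨g, hg, rfl⟩ _ ⟨a, ha, rfl⟩
  exact ⟨g * a * g⁻¹, (hs i hi).2 g hg a ha, by simp⟩

theorem comap {G' : Type*} [Group G'] {A B : Subgroup G'} (f : G →* G')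
    (h : IsSubnormalIn A B) : IsSubnormalIn (A.comap f) (B.comap f) := by
  obtain ⟨n, s, rfl, rfl, hs⟩ := h
  refine ⟨n, fun k => (s k).comap f, rfl, rfl, fun i hi => ⟨Subgroup.comap_mono (hs i hi).1, ?_⟩⟩
  intro g hg a ha
  simpa using (hs i hi).2 (f g) hg (f a) ha

theorem inf_left {A B : Subgroup G} (C : Subgroup G) (h : IsSubnormalIn A B) :
    IsSubnormalIn (C ⊓ A) (C ⊓ B) := by
  obtain ⟨n, s, rfl, rfl, hs⟩ := h
  refine ⟨n, fun k => C ⊓ s k, rfl, rfl, fun i hi => ⟨inf_le_inf_left C (hs i hi).1, ?_⟩⟩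
  intro g hg a ha
  rw [Subgroup.mem_inf] at hg ha ⊢
  exact ⟨mul_mem (mul_mem hg.1 ha.1) (inv_mem hg.1), (hs i hi).2 g hg.2 a ha.2⟩

theorem of_le_of_normal {A B C : Subgroup G} (hAB : A ≤ B)
    (hA : ∀ g ∈ B, ∀ a ∈ A, g * a * g⁻¹ ∈ A) (hBC : IsSubnormalIn B C) : IsSubnormalIn A C := by
  obtain ⟨n, s, rfl, rfl, hs⟩ := hBC
  refine ⟨n + 1, fun k => Nat.casesOn k A s, rfl, rfl, fun i hi => ?_⟩
  cases i with
  | zero => exact ⟨hAB, hA⟩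
  | succ i => exact hs i (by omega)

end IsSubnormalIn

theorem existsUnique_pi_iff {ι : Type*} {β : ι → Type*} {q : ∀ i, β i → Prop} :
    (∃! f : ∀ i, β i, ∀ i, q i (f i)) ↔ ∀ i, ∃! b, q i b := by
  classical
  constructor
  · rintro ⟨f, hf, huniq⟩ i
    refine ⟨f i, hf i, fun b hb => ?_⟩
    have hupdate : ∀ j, q j (Function.update f i b j) := fun j => by
      rcases eq_or_ne j i with rfl | hj
      · simpa using hb
      · simpa [hj] using hf j
    simpa using congrFun (huniq _ hupdate) i
  · intro h
    choose f hf huniq using h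
    exact ⟨f, hf, fun g hg => funext fun i => huniq i _ (hg i)⟩

section Pi

variable {ι : Type*} {H : ι → Type*} [∀ i, Group (H i)]

theorem Pi.commute_of_forall_mem_zpowers {g x : ∀ i, H i}
    (hg : ∀ i, g i ∈ Subgroup.zpowers (x i)) : Commute g x :=
  Pi.commute_iff.mpr fun i => by
    obtain ⟨k, hk⟩ := Subgroup.mem_zpowers_iff.mp (hg i)
    exact hk ▸ Commute.zpow_self (x i) k

theorem closure_mulSingle_le_pi_zpowers [DecidableEq ι] (x : ∀ i, H i) (i : ι) (h : H i) :
    Subgroup.closure {Pi.mulSingle i h, x} ≤ Subgroup.pi {i}ᶜ fun j => Subgroup.zpowers (x j) := by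
  rw [Subgroup.closure_le]
  rintro _ (rfl | rfl) j hj
  · simp [Pi.mulSingle_eq_of_ne hj]
  · exact Subgroup.mem_zpowers _

theorem isSubnormalIn_zpowers_closure_mulSingle [DecidableEq ι] (x : ∀ i, H i) (i : ι) (h : H i)
    (hh : IsSubnormalIn (Subgroup.zpowers (x i)) (Subgroup.closure {h, x i})) :
    IsSubnormalIn (Subgroup.zpowers x) (Subgroup.closure {Pi.mulSingle i h, x}) := by
  set C := Subgroup.closure {Pi.mulSingle i h, x}
  set e := Pi.evalMonoidHom H i
  have hCe : C ≤ (Subgroup.closure {h, x i}).comap e := by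
    rw [← Subgroup.map_le_iff_le_comap, MonoidHom.map_closure, Set.image_pair]
    simp [e]
  have hxC : x ∈ C := Subgroup.subset_closure (Set.mem_insert_of_mem _ rfl)
  refine IsSubnormalIn.of_le_of_normal (B := C ⊓ (Subgroup.zpowers (x i)).comap e)
    (le_inf (Subgroup.zpowers_le.mpr hxC) (Subgroup.zpowers_le.mpr (Subgroup.mem_zpowers _)))
    ?_ ?_
  · rintro g ⟨hgC, hgi⟩ _ ⟨k, rfl⟩
    have hgx : Commute g x := Pi.commute_of_forall_mem_zpowers fun j => by
      rcases eq_or_ne j i with rfl | hj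
      · exact hgi
      · exact closure_mulSingle_le_pi_zpowers x i h hgC j hj
    rw [(hgx.zpow_right k).mul_inv_cancel]
    exact ⟨k, rfl⟩
  · have hchain := (hh.comap e).inf_left C
    rwa [inf_eq_left.mpr hCe] at hchain

theorem subnormalizer_le_pi (x : ∀ i, H i) :
    subnormalizer x ≤ Subgroup.pi Set.univ fun i => subnormalizer (x i) := by
  rw [subnormalizer, Subgroup.closure_le]
  intro g hg i _
  have h := hg.map (Pi.evalMonoidHom H i)
  rw [MonoidHom.map_zpowers, MonoidHom.map_closure, Set.image_pair] at h
  exact Subgroup.subset_closure h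

theorem map_mulSingle_subnormalizer_le [DecidableEq ι] (x : ∀ i, H i) (i : ι) :
    (subnormalizer (x i)).map (MonoidHom.mulSingle H i) ≤ subnormalizer x := by
  rw [subnormalizer, MonoidHom.map_closure, Subgroup.closure_le]
  rintro _ ⟨h, hh, rfl⟩
  exact Subgroup.subset_closure (isSubnormalIn_zpowers_closure_mulSingle x i h hh)

theorem subnormalizer_pi [Finite ι] (x : ∀ i, H i) :
    subnormalizer x = Subgroup.pi Set.univ fun i => subnormalizer (x i) := by
  classical
  exact le_antisymm (subnormalizer_le_pi x)
    (Subgroup.pi_le_iff.mpr (map_mulSingle_subnormalizer_le x))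

theorem Subgroup.map_evalMonoidHom_pi (K : ∀ i, Subgroup (H i)) (i : ι) :
    (Subgroup.pi Set.univ K).map (Pi.evalMonoidHom H i) = K i := by
  classical
  refine le_antisymm (Subgroup.map_le_iff_le_comap.mpr fun g hg => hg i trivial) fun y hy => ?_
  exact ⟨Pi.mulSingle i y, (Subgroup.mulSingle_mem_pi i y).mpr fun _ => hy,
    Pi.mulSingle_eq_same i y⟩

theorem Subgroup.le_pi_map_evalMonoidHom (R : Subgroup (∀ i, H i)) :
    R ≤ Subgroup.pi Set.univ fun i => R.map (Pi.evalMonoidHom H i) :=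
  fun r hr _ _ => ⟨r, hr, rfl⟩

variable {p : ℕ}

theorem IsPGroup.pi [Finite ι] {K : ∀ i, Subgroup (H i)} (hK : ∀ i, IsPGroup p (K i)) :
    IsPGroup p (Subgroup.pi Set.univ K) := by
  cases nonempty_fintype ι
  intro g
  choose k hk using fun i => hK i ⟨g.1 i, g.2 i trivial⟩
  refine ⟨Finset.univ.sup k, Subtype.ext <| funext fun i => ?_⟩
  obtain ⟨m, hm⟩ := pow_dvd_pow p (Finset.le_sup (Finset.mem_univ i) : k i ≤ Finset.univ.sup k)
  have hi : g.1 i ^ p ^ k i = 1 := congrArg Subtype.val (hk i)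
  simp [hm, pow_mul, hi]

def Sylow.pi [Finite ι] (Q : ∀ i, Sylow p (H i)) : Sylow p (∀ i, H i) where
  toSubgroup := Subgroup.pi Set.univ fun i => Q i
  isPGroup' := IsPGroup.pi fun i => (Q i).isPGroup'
  is_maximal' {R} hR hle := by
    refine le_antisymm ((Subgroup.le_pi_map_evalMonoidHom R).trans fun r hr i _ => ?_) hle
    have hQi := Subgroup.map_mono (f := Pi.evalMonoidHom H i) hle
    rw [Subgroup.map_evalMonoidHom_pi] at hQi
    exact ((Q i).is_maximal' (hR.map _) hQi).le (hr i trivial)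

theorem Sylow.mem_pi [Finite ι] {Q : ∀ i, Sylow p (H i)} {x : ∀ i, H i} :
    x ∈ Sylow.pi Q ↔ ∀ i, x i ∈ Q i := by
  change x ∈ Subgroup.pi Set.univ _ ↔ _
  simp only [Subgroup.mem_pi, Set.mem_univ, true_imp_iff]
  rfl

theorem Sylow.pi_injective [Finite ι] : Function.Injective (Sylow.pi (p := p) (H := H)) :=
  fun Q Q' hQ => funext fun i => Sylow.ext <| by
    simpa [Sylow.pi, Subgroup.map_evalMonoidHom_pi] using
      congrArg (fun P : Sylow p (∀ i, H i) => (P : Subgroup _).map (Pi.evalMonoidHom H i)) hQ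

theorem Sylow.pi_surjective [Finite ι] : Function.Surjective (Sylow.pi (p := p) (H := H)) := by
  intro P
  choose Q hQ using fun i => (P.isPGroup'.map (Pi.evalMonoidHom H i)).exists_le_sylow
  refine ⟨Q, Sylow.ext (P.is_maximal' (Sylow.pi Q).isPGroup' ?_)⟩
  exact (Subgroup.le_pi_map_evalMonoidHom _).trans fun r hr i _ => hQ i (hr i trivial)

theorem existsUnique_sylow_pi_iff [Finite ι] (x : ∀ i, H i) :
    (∃! P : Sylow p (∀ i, H i), x ∈ P) ↔ ∀ i, ∃! Q : Sylow p (H i), x i ∈ Q := by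
  rw [← existsUnique_pi_iff]
  exact ((Equiv.ofBijective _ ⟨Sylow.pi_injective, Sylow.pi_surjective⟩).existsUnique_congr
    fun Q => Sylow.mem_pi.symm).symm

end Pi

theorem stmt_13_general {ι : Type*} [Fintype ι] (H : ι → Type*) [∀ i, Group (H i)]
    {p : ℕ} (x : ∀ i, H i) :
    subnormalizer x = Subgroup.pi Set.univ (fun i => subnormalizer (x i)) ∧
    ((∃ k : ℕ, orderOf x = p ^ k) →
      ((∃! P : Sylow p (∀ i, H i), x ∈ P) ↔
        ∀ i, ∃! Q : Sylow p (H i), x i ∈ Q)) :=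
  ⟨subnormalizer_pi x, fun _ => existsUnique_sylow_pi_iff x⟩

theorem stmt_13 {ι : Type*} [Fintype ι] (H : ι → Type*) [∀ i, Group (H i)]
    [∀ i, Fintype (H i)] {p : ℕ} (hp : p.Prime) (x : ∀ i, H i) :
    subnormalizer x = Subgroup.pi Set.univ (fun i => subnormalizer (x i)) ∧
    ((∃ k : ℕ, orderOf x = p ^ k) →
      ((∃! P : Sylow p (∀ i, H i), x ∈ P) ↔
        ∀ i, ∃! Q : Sylow p (H i), x i ∈ Q)) :=
  stmt_13_general H x
end
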